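/- arXiv:2212.09491 — 3 statements merged into one kernel-verified Lean document; each statement's English description precedes it below -/
import Mathlib

section
/- Let V satisfy A₋₁V² + A₀V + A₁ = 0, and suppose I − G̃V is invertible. Set Y = V(I − G̃V)⁻¹ and Z = (I − G̃V)·V·(I − G̃V)⁻¹. Then M̃·[Y; I]·Z = Ñ·[Y; I], where M̃ = [[G̃, I], [−R(G̃), −(A₀ + A₁G̃)]], R(G̃) = A₁G̃² + A₀G̃ + A₋₁, and Ñ = [[I, 0], [0, A₁]]. -/
/-!
Write `W = I - G̃V`. Since `G̃V + W = I`, one has `G̃Y + I = W⁻¹`, so the top block row of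
`M̃ [Y; I] Z` is `W⁻¹ · WVW⁻¹ = Y`. In the bottom block row everything collapses to
`-(R(G̃)V² + (A₀ + A₁G̃)WV) W⁻¹`, and a noncommutative expansion shows
`R(G̃)V² + (A₀ + A₁G̃)WV = (A₋₁V² + A₀V + A₁) - A₁W = -A₁W`.
-/

open Matrix

section Ring

variable {R : Type*} [Ring R] {Am1 A0 A1 G V W : R}

theorem reversed_quadratic_identity (Am1 A0 A1 G V : R) :
    (A1 * G ^ 2 + A0 * G + Am1) * V ^ 2 + (A0 + A1 * G) * ((1 - G * V) * V) =
      Am1 * V ^ 2 + A0 * V + A1 - A1 * (1 - G * V) := by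
  noncomm_ring

theorem mul_mul_add_one_eq_of_one_sub_mul_mul_eq_one (h : (1 - G * V) * W = 1) :
    G * (V * W) + 1 = W := by
  calc G * (V * W) + 1 = G * (V * W) + (1 - G * V) * W := by rw [h]
    _ = W := by noncomm_ring

theorem dualPencil_upper_row_eq (hr : (1 - G * V) * W = 1) (hl : W * (1 - G * V) = 1) :
    (G * (V * W) + 1) * ((1 - G * V) * V * W) = V * W := by
  rw [mul_mul_add_one_eq_of_one_sub_mul_mul_eq_one hr, ← mul_assoc, ← mul_assoc, hl, one_mul]

theorem dualPencil_lower_row_eq (hV : Am1 * V ^ 2 + A0 * V + A1 = 0) (hr : (1 - G * V) * W = 1)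
    (hl : W * (1 - G * V) = 1) :
    (-(A1 * G ^ 2 + A0 * G + Am1) * (V * W) + -(A0 + A1 * G)) * ((1 - G * V) * V * W) = A1 := by
  calc _ = -((A1 * G ^ 2 + A0 * G + Am1) * V * (W * (1 - G * V)) * V
          + (A0 + A1 * G) * ((1 - G * V) * V)) * W := by noncomm_ring
    _ = -((A1 * G ^ 2 + A0 * G + Am1) * V ^ 2 + (A0 + A1 * G) * ((1 - G * V) * V)) * W := by
          rw [hl, mul_one, mul_assoc _ V V, ← sq]
    _ = A1 * ((1 - G * V) * W) := by rw [reversed_quadratic_identity, hV]; noncomm_ring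
    _ = A1 := by rw [hr, mul_one]

end Ring

/-- Dual invariant-subspace relation for the defect pencil:
with `Y = V(I − G̃V)⁻¹` and `Z = (I − G̃V)V(I − G̃V)⁻¹`, one has `M̃ [Y; I] Z = Ñ [Y; I]`. -/
theorem stmt9 {n : ℕ} (Am1 A0 A1 Gt V Y Z : Matrix (Fin n) (Fin n) ℝ)
    (hV : Am1 * V ^ 2 + A0 * V + A1 = 0)
    (hinv : IsUnit (1 - Gt * V).det)
    (hY : Y = V * (1 - Gt * V)⁻¹)
    (hZ : Z = (1 - Gt * V) * V * (1 - Gt * V)⁻¹) :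
    fromBlocks Gt 1 (-(A1 * Gt ^ 2 + A0 * Gt + Am1)) (-(A0 + A1 * Gt)) *
        fromRows Y (1 : Matrix (Fin n) (Fin n) ℝ) * Z =
      fromBlocks 1 (0 : Matrix (Fin n) (Fin n) ℝ) (0 : Matrix (Fin n) (Fin n) ℝ) A1 * fromRows Y (1 : Matrix (Fin n) (Fin n) ℝ) := by
  have hr := mul_nonsing_inv _ hinv
  have hl := nonsing_inv_mul _ hinv
  subst hY hZ
  simp only [fromBlocks_mul_fromRows, fromRows_mul, mul_one, one_mul, zero_mul, add_zero, zero_add]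
  congr 1
  · exact dualPencil_upper_row_eq hr hl
  · exact dualPencil_lower_row_eq hV hr hl
end

section
/- Suppose A₀ + A₁G̃ is invertible and H satisfies A₁H² + A₁HG̃ + (A₀ + A₁G̃)H + R(G̃) = 0 with R(G̃) = A₁G̃² + A₀G̃ + A₋₁. Let S = (A₀ + A₁G̃)⁻¹ and set M̌ = [[−SA₋₁, 0], [SR(G̃), I]], Ň = [[I, SA₁], [0, −SA₁]]. Then M̌·[I; H] = Ň·[I; H]·(G̃ + H). -/
/-!
Write `K = A₀ + A₁G̃`, so that `S K = 1`. Since `R(G̃) = K G̃ + A₋₁`, we get `S R(G̃) = G̃ + S A₋₁`,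
and multiplying the defect equation on the left by `S` gives `S A₁ H (G̃ + H) = -(H + S R(G̃))`.
The bottom block row of the pencil identity is the second relation, and the top block row is the
second relation combined with the first.
-/

open Matrix

section DefectEquation

variable {R : Type*} [Ring R] {Am1 A0 A1 Gt H S : R}

lemma mul_defect_residual_eq (hS : S * (A0 + A1 * Gt) = 1) :
    S * (A1 * Gt ^ 2 + A0 * Gt + Am1) = Gt + S * Am1 := by
  calc S * (A1 * Gt ^ 2 + A0 * Gt + Am1) = S * (A0 + A1 * Gt) * Gt + S * Am1 := by noncomm_ring
    _ = Gt + S * Am1 := by rw [hS, one_mul]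

lemma mul_defect_quadratic_eq (hS : S * (A0 + A1 * Gt) = 1)
    (h : A1 * H ^ 2 + A1 * H * Gt + (A0 + A1 * Gt) * H + (A1 * Gt ^ 2 + A0 * Gt + Am1) = 0) :
    S * A1 * H * (Gt + H) = -(H + S * (A1 * Gt ^ 2 + A0 * Gt + Am1)) := by
  have hSh := congrArg (S * ·) h
  simp only [mul_zero] at hSh
  calc S * A1 * H * (Gt + H)
      = S * (A1 * H ^ 2 + A1 * H * Gt + (A0 + A1 * Gt) * H + (A1 * Gt ^ 2 + A0 * Gt + Am1))
          - S * (A0 + A1 * Gt) * H - S * (A1 * Gt ^ 2 + A0 * Gt + Am1) := by noncomm_ring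
    _ = -(H + S * (A1 * Gt ^ 2 + A0 * Gt + Am1)) := by rw [hSh, hS]; noncomm_ring

end DefectEquation

theorem defect_pencil_mul_fromRows {n α : Type*} [Fintype n] [DecidableEq n] [Ring α]
    {Am1 A0 A1 Gt H S : Matrix n n α} (hS : S * (A0 + A1 * Gt) = 1)
    (h : A1 * H ^ 2 + A1 * H * Gt + (A0 + A1 * Gt) * H + (A1 * Gt ^ 2 + A0 * Gt + Am1) = 0) :
    fromBlocks (-(S * Am1)) (0 : Matrix n n α) (S * (A1 * Gt ^ 2 + A0 * Gt + Am1)) 1 *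
        fromRows (1 : Matrix n n α) H =
      fromBlocks 1 (S * A1) (0 : Matrix n n α) (-(S * A1)) * fromRows (1 : Matrix n n α) H *
        (Gt + H) := by
  have hquad := mul_defect_quadratic_eq hS h
  rw [fromBlocks_mul_fromRows, fromBlocks_mul_fromRows, fromRows_mul, fromRows_ext_iff]
  constructor
  · calc -(S * Am1) * 1 + 0 * H = Gt - S * (A1 * Gt ^ 2 + A0 * Gt + Am1) := by
          rw [mul_defect_residual_eq hS]; noncomm_ring
      _ = (1 * 1 + S * A1 * H) * (Gt + H) := by rw [add_mul, hquad]; noncomm_ring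
  · calc S * (A1 * Gt ^ 2 + A0 * Gt + Am1) * 1 + 1 * H = -(S * A1 * H * (Gt + H)) := by
          rw [hquad]; noncomm_ring
      _ = (0 * 1 + -(S * A1) * H) * (Gt + H) := by noncomm_ring

/-- SSF-I form of the defect pencil: with `S = (A₀ + A₁G̃)⁻¹`,
`M̌ = [[−SA₋₁, 0], [SR(G̃), I]]`, `Ň = [[I, SA₁], [0, −SA₁]]`, if `H` solves the defect
equation then `M̌ [I; H] = Ň [I; H] (G̃ + H)`. -/
theorem stmt10 {n : ℕ} (Am1 A0 A1 Gt H S : Matrix (Fin n) (Fin n) ℝ)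
    (hinv : IsUnit (A0 + A1 * Gt).det)
    (hS : S = (A0 + A1 * Gt)⁻¹)
    (h : A1 * H ^ 2 + A1 * H * Gt + (A0 + A1 * Gt) * H +
          (A1 * Gt ^ 2 + A0 * Gt + Am1) = 0) :
    fromBlocks (-(S * Am1)) (0 : Matrix (Fin n) (Fin n) ℝ) (S * (A1 * Gt ^ 2 + A0 * Gt + Am1)) 1 *
        fromRows (1 : Matrix (Fin n) (Fin n) ℝ) H =
      fromBlocks 1 (S * A1) (0 : Matrix (Fin n) (Fin n) ℝ) (-(S * A1)) * fromRows (1 : Matrix (Fin n) (Fin n) ℝ) H * (Gt + H) :=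
  defect_pencil_mul_fromRows (hS ▸ nonsing_inv_mul _ hinv) h
end

section
/- Let G be a row-stochastic n×n matrix (G𝟏 = 𝟏) and u ∈ ℝⁿ with uᵀ𝟏 = 1. Then the characteristic polynomial of G − 𝟏uᵀ equals λ·(characteristic polynomial of G)/(λ − 1); equivalently, the eigenvalues of G − 𝟏uᵀ are those of G with the eigenvalue 1 (from the eigenvector 𝟏) replaced by 0. -/
/-! With `c = X - μ`, the eigenvector relation `A v = μ v` gives `charmatrix A · v = c v`, hence
`c • (charmatrix A + v wᵀ) = charmatrix A * (c • 1 + v wᵀ)`. Taking determinants, the rank-one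
factor contributes `c ^ (n - 1) * (c + w ⬝ᵥ v)`, and cancelling the monic `c ^ n` leaves
`c * charpoly (A - v wᵀ) = (c + w ⬝ᵥ v) * charpoly A`, with no invertibility needed. -/

open Matrix Polynomial

namespace Matrix

variable {n R : Type*} [Fintype n] [DecidableEq n] [CommRing R]

theorem mul_det_scalar_add_vecMulVec (c : R) (u v : n → R) :
    c * (scalar n c + vecMulVec u v).det = c ^ Fintype.card n * (c + v ⬝ᵥ u) := by
  have h := eval_charpoly (vecMulVec (-u) v) c
  rw [charpoly_vecMulVec, neg_vecMulVec, sub_neg_eq_add] at h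
  rw [← h]
  cases isEmpty_or_nonempty n
  · simp
  · obtain ⟨k, hk⟩ := Nat.exists_eq_add_one.mpr (Fintype.card_pos (α := n))
    simp only [hk, eval_sub, eval_pow, eval_X, eval_smul, neg_dotProduct, smul_eq_mul,
      Nat.add_sub_cancel, dotProduct_comm v u]
    ring

theorem charmatrix_sub (A B : Matrix n n R) :
    charmatrix (A - B) = charmatrix A + B.map C := by
  simp only [charmatrix, map_sub]
  abel

theorem charmatrix_mulVec_of_mulVec_eq_smul {A : Matrix n n R} {v : n → R} {μ : R}
    (hv : A *ᵥ v = μ • v) : charmatrix A *ᵥ (C ∘ v) = (X - C μ) • (C ∘ v) := by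
  ext i : 1
  simp only [charmatrix, RingHom.mapMatrix_apply, sub_mulVec, scalar_apply, mulVec_diagonal,
    Pi.sub_apply, ← RingHom.map_mulVec, hv]
  simp [sub_mul]

theorem charpoly_sub_vecMulVec_of_mulVec_eq_smul {A : Matrix n n R} {v : n → R} {μ : R}
    (hv : A *ᵥ v = μ • v) (w : n → R) :
    (X - C μ) * (A - vecMulVec v w).charpoly = (X - C (μ - w ⬝ᵥ v)) * A.charpoly := by
  set c : R[X] := X - C μ
  have hcharmatrix : charmatrix (A - vecMulVec v w) =
      charmatrix A + vecMulVec (C ∘ v) (C ∘ w) := by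
    rw [charmatrix_sub]
    congr 1
    ext i j
    simp [vecMulVec_apply]
  have hfactor : c • charmatrix (A - vecMulVec v w) =
      charmatrix A * (scalar n c + vecMulVec (C ∘ v) (C ∘ w)) := by
    rw [hcharmatrix, mul_add, mul_vecMulVec, charmatrix_mulVec_of_mulVec_eq_smul hv, smul_add,
      smul_vecMulVec, scalar_apply, ← smul_one_eq_diagonal, Matrix.mul_smul, mul_one]
  have hdet : c ^ Fintype.card n * (c * (A - vecMulVec v w).charpoly) =
      c ^ Fintype.card n * ((c + C (w ⬝ᵥ v)) * A.charpoly) := by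
    have h := congrArg (c * det ·) hfactor
    simp only [det_smul, det_mul, mul_left_comm c, mul_det_scalar_add_vecMulVec] at h
    rw [charpoly, h, charpoly, RingHom.map_dotProduct]
    ring
  rw [((monic_X_sub_C μ).pow _).isRegular.left.eq_iff] at hdet
  rw [hdet, map_sub]
  ring

end Matrix

/-- Brauer-type shift: If `G𝟏 = 𝟏` and `uᵀ𝟏 = 1`, then
`(λ − 1)·charpoly(G − 𝟏uᵀ) = λ·charpoly(G)`, i.e. the eigenvalues of `G − 𝟏uᵀ` are those
of `G` with the eigenvalue `1` replaced by `0`. -/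
theorem stmt12 {n : ℕ} (G : Matrix (Fin n) (Fin n) ℝ) (u : Fin n → ℝ)
    (hG : G.mulVec (fun _ => (1 : ℝ)) = fun _ => (1 : ℝ))
    (hu : u ⬝ᵥ (fun _ => (1 : ℝ)) = 1) :
    (X - 1) * (G - vecMulVec (fun _ => (1 : ℝ)) u).charpoly = X * G.charpoly := by
  have h := charpoly_sub_vecMulVec_of_mulVec_eq_smul (μ := 1) (by rw [hG, one_smul]) u
  rwa [hu, sub_self, map_zero, sub_zero, map_one] at h
end
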